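/- arXiv:2307.05446 — 4 statements merged into one kernel-verified Lean document; each statement's English description precedes it below -/
import Mathlib

section
/- Let G be a graph on vertex set {v_1,…,v_n} and let H be the graph formed by two disjoint copies G^1, G^2 of G with vertex sets {v_i^1} and {v_i^2}, together with the vertical edges v_i^1 v_i^2 for each i. If M = {v_1^1 v_1^2, …, v_p^1 v_p^2} is an acyclic matching in H, then {v_1,…,v_p} is an independent set in G. -/
/-! If two vertices `u v ∈ S` were adjacent in `G`, then `(u,1) (v,1) (v,2) (u,2)` would be a
4-cycle on the endpoints of the matching, which is impossible in a forest. -/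

/-- `M` is a matching in `G`: a set of edges of `G` that are pairwise vertex-disjoint. -/
def IsMatching {V : Type*} (G : SimpleGraph V) (M : Set (Sym2 V)) : Prop :=
  M ⊆ G.edgeSet ∧ M.Pairwise fun e f => ∀ v, v ∈ e → v ∉ f

/-- The set of `M`-saturated vertices (endpoints of edges of `M`). -/
def mVerts {V : Type*} (M : Set (Sym2 V)) : Set V := {v | ∃ e ∈ M, v ∈ e}

/-- `M` is a perfect matching of `G`: a matching saturating every vertex. -/
def IsPerfectM {V : Type*} (G : SimpleGraph V) (M : Set (Sym2 V)) : Prop :=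
  IsMatching G M ∧ ∀ v, v ∈ mVerts M

/-- `M` is an acyclic matching: the subgraph induced by the endpoints is a forest. -/
def IsAcyclicMatching {V : Type*} (G : SimpleGraph V) (M : Set (Sym2 V)) : Prop :=
  IsMatching G M ∧ (G.induce (mVerts M)).IsAcyclic

/-- `M` is an induced matching: the subgraph induced by the endpoints is exactly `M`. -/
def IsInducedMatching {V : Type*} (G : SimpleGraph V) (M : Set (Sym2 V)) : Prop :=
  IsMatching G M ∧ ∀ e ∈ G.edgeSet, (∀ v, v ∈ e → v ∈ mVerts M) → e ∈ M

/-- `M` is a uniquely restricted matching: the subgraph induced by the endpoints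
has exactly one perfect matching. -/
def IsURMatching {V : Type*} (G : SimpleGraph V) (M : Set (Sym2 V)) : Prop :=
  IsMatching G M ∧
    ∃! N : Set (Sym2 (mVerts M)), IsPerfectM (G.induce (mVerts M)) N

/-- `S` is an independent set in `G`. -/
def IsIndep {V : Type*} (G : SimpleGraph V) (S : Set V) : Prop :=
  S.Pairwise fun u v => ¬ G.Adj u v

/-- Two disjoint copies of `G` together with the vertical edges `(v,true)(v,false)`. -/
def double {V : Type*} (G : SimpleGraph V) : SimpleGraph (V × Bool) :=
  SimpleGraph.fromRel fun a b =>
    (a.2 = b.2 ∧ G.Adj a.1 b.1) ∨ (a.1 = b.1 ∧ a.2 ≠ b.2)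
namespace SimpleGraph

variable {V : Type*} {G : SimpleGraph V}

theorem IsAcyclic.eq_of_adj_of_adj (hG : G.IsAcyclic) {a b c d : V}
    (hab : G.Adj a b) (hbc : G.Adj b c) (had : G.Adj a d) (hdc : G.Adj d c) (hac : a ≠ c) :
    b = d := by
  have hp : (Walk.cons hab (Walk.cons hbc Walk.nil)).IsPath := by
    simp [Walk.isPath_def, hab.ne, hbc.ne, hac]
  have hq : (Walk.cons had (Walk.cons hdc Walk.nil)).IsPath := by
    simp [Walk.isPath_def, had.ne, hdc.ne, hac]
  have hpq : (⟨_, hp⟩ : G.Path a c) = ⟨_, hq⟩ := (hG.subsingleton_path a c).elim _ _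
  simpa using congrArg (fun p : G.Path a c => p.val.getVert 1) hpq

end SimpleGraph

theorem double_adj {V : Type*} {G : SimpleGraph V} {a b : V × Bool} :
    (double G).Adj a b ↔ (a.2 = b.2 ∧ G.Adj a.1 b.1) ∨ (a.1 = b.1 ∧ a.2 ≠ b.2) := by
  simp only [double, SimpleGraph.fromRel_adj]
  constructor
  · rintro ⟨-, h | ⟨h2, h1⟩ | ⟨h1, h2⟩⟩
    exacts [h, Or.inl ⟨h2.symm, h1.symm⟩, Or.inr ⟨h1.symm, Ne.symm h2⟩]
  · rintro (h | h)
    · exact ⟨fun hab => h.2.ne (congrArg Prod.fst hab), Or.inl (Or.inl h)⟩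
    · exact ⟨fun hab => h.2 (congrArg Prod.snd hab), Or.inl (Or.inr h)⟩

theorem mem_mVerts_verticals {V : Type*} {S : Set V} {v : V} (hv : v ∈ S) (i : Bool) :
    (v, i) ∈ mVerts ((fun v => s((v, true), (v, false))) '' S) :=
  ⟨_, ⟨v, hv, rfl⟩, by cases i <;> simp⟩

theorem stmt8 {V : Type*} (G : SimpleGraph V) (S : Set V)
    (hM : IsAcyclicMatching (double G) ((fun v => s((v, true), (v, false))) '' S)) :
    IsIndep G S := by
  intro u hu v hv huv hadj
  let vert (w : V) (hw : w ∈ S) (i : Bool) : mVerts ((fun v => s((v, true), (v, false))) '' S) :=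
    ⟨(w, i), mem_mVerts_verticals hw i⟩
  have hlayer (i : Bool) : ((double G).induce _).Adj (vert u hu i) (vert v hv i) :=
    double_adj.2 (Or.inl ⟨rfl, hadj⟩)
  have hvertical {w} (hw : w ∈ S) : ((double G).induce _).Adj (vert w hw true) (vert w hw false) :=
    double_adj.2 (Or.inr ⟨rfl, Bool.noConfusion⟩)
  have h := hM.2.eq_of_adj_of_adj (hlayer true) (hvertical hv) (hvertical hu) (hlayer false)
    (by simp [vert, huv])
  simp [vert] at h
end

section
/- Let G be a graph on vertex set {v_1,…,v_n} and H as above (two copies of G plus vertical edges). If M = {v_1^1 v_1^2, …, v_p^1 v_p^2} is a uniquely restricted matching in H, then {v_1,…,v_p} is an independent set in G. -/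
/-!
If `u, v ∈ S` were adjacent in `G`, then `(u,1) (v,1) (v,2) (u,2)` would be a 4-cycle of `H`
alternating with respect to the matching of vertical edges. Exchanging the two vertical edges
`(u,1)(u,2)`, `(v,1)(v,2)` for the two horizontal ones `(u,1)(v,1)`, `(u,2)(v,2)` gives a
second perfect matching of the subgraph induced by the saturated vertices.
-/

section Matching

variable {V : Type*} {G : SimpleGraph V} {M N P Q : Set (Sym2 V)}

theorem IsMatching.eq_of_mem_of_mem (hM : IsMatching G M) {e f : Sym2 V} (he : e ∈ M)
    (hf : f ∈ M) {v : V} (hve : v ∈ e) (hvf : v ∈ f) : e = f := by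
  by_contra hef
  exact hM.2 he hf hef v hve hvf

theorem IsMatching.mono (hM : IsMatching G M) (hNM : N ⊆ M) : IsMatching G N :=
  ⟨hNM.trans hM.1, hM.2.mono hNM⟩

theorem mVerts_union : mVerts (M ∪ N) = mVerts M ∪ mVerts N := by
  ext v
  simp only [mVerts, Set.mem_union, Set.mem_ofPred_eq, or_and_right, exists_or]

theorem mVerts_pair (a b c d : V) : mVerts {s(a, b), s(c, d)} = {a, b, c, d} := by
  ext v
  simp [mVerts, or_assoc]

theorem IsMatching.union (hM : IsMatching G M) (hN : IsMatching G N)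
    (hMN : Disjoint (mVerts M) (mVerts N)) : IsMatching G (M ∪ N) := by
  refine ⟨Set.union_subset hM.1 hN.1, ?_⟩
  rintro e (he | he) f (hf | hf) hef v hve hvf
  · exact hM.2 he hf hef v hve hvf
  · exact hMN.ne_of_mem ⟨e, he, hve⟩ ⟨f, hf, hvf⟩ rfl
  · exact hMN.ne_of_mem ⟨f, hf, hvf⟩ ⟨e, he, hve⟩ rfl
  · exact hN.2 he hf hef v hve hvf

theorem IsMatching.disjoint_mVerts_diff (hM : IsMatching G M) (hPM : P ⊆ M) :
    Disjoint (mVerts (M \ P)) (mVerts P) := by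
  rw [Set.disjoint_left]
  rintro v ⟨e, ⟨he, heP⟩, hve⟩ ⟨f, hfP, hvf⟩
  exact heP (hM.eq_of_mem_of_mem he (hPM hfP) hve hvf ▸ hfP)

theorem mVerts_diff_union (hPM : P ⊆ M) (hQP : mVerts Q = mVerts P) :
    mVerts (M \ P ∪ Q) = mVerts M := by
  rw [mVerts_union, hQP, ← mVerts_union, Set.sdiff_union_of_subset hPM]

theorem IsMatching.diff_union (hM : IsMatching G M) (hPM : P ⊆ M) (hQ : IsMatching G Q)
    (hQP : mVerts Q = mVerts P) : IsMatching G (M \ P ∪ Q) :=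
  (hM.mono Set.sdiff_subset).union hQ (hQP ▸ hM.disjoint_mVerts_diff hPM)

theorem IsPerfectM.diff_union (hM : IsPerfectM G M) (hPM : P ⊆ M) (hQ : IsMatching G Q)
    (hQP : mVerts Q = mVerts P) : IsPerfectM G (M \ P ∪ Q) :=
  ⟨hM.1.diff_union hPM hQ hQP, fun v => mVerts_diff_union hPM hQP ▸ hM.2 v⟩

theorem isMatching_pair {a b c d : V} (hab : G.Adj a b) (hcd : G.Adj c d)
    (hdisj : Disjoint ({a, b} : Set V) {c, d}) : IsMatching G {s(a, b), s(c, d)} := by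
  refine ⟨by simp [Set.insert_subset_iff, hab, hcd], ?_⟩
  rintro e (rfl | rfl) f (rfl | rfl) hef v hve hvf <;> try exact hef rfl
  · exact hdisj.ne_of_mem (by simpa using hve) (by simpa using hvf) rfl
  · exact hdisj.ne_of_mem (by simpa using hvf) (by simpa using hve) rfl

theorem IsMatching.disjoint_of_ne {a b c d : V} (hM : IsMatching G M) (hab : s(a, b) ∈ M)
    (hcd : s(c, d) ∈ M) (hne : s(a, b) ≠ s(c, d)) : Disjoint ({a, b} : Set V) {c, d} := by
  rw [Set.disjoint_left]
  intro v hv hv'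
  exact hM.2 hab hcd hne v (by simpa using hv) (by simpa using hv')

/-- Swap `ab, cd` for `ac, bd` along the alternating 4-cycle `a b d c`. -/
theorem IsPerfectM.exists_ne_of_adj_adj (hM : IsPerfectM G M) {a b c d : V}
    (hab : s(a, b) ∈ M) (hcd : s(c, d) ∈ M) (hne : s(a, b) ≠ s(c, d))
    (hac : G.Adj a c) (hbd : G.Adj b d) : ∃ N, IsPerfectM G N ∧ N ≠ M := by
  have hdisj := hM.1.disjoint_of_ne hab hcd hne
  have had : a ≠ d := hdisj.ne_of_mem (by simp) (by simp)
  have hbc : b ≠ c := hdisj.ne_of_mem (by simp) (by simp)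
  have hQ : IsMatching G {s(a, c), s(b, d)} :=
    isMatching_pair hac hbd (by simp [(hM.1.1 hab).ne.symm, (hM.1.1 hcd).ne.symm, had.symm, hbc])
  have hQP : mVerts {s(a, c), s(b, d)} = mVerts {s(a, b), s(c, d)} := by
    rw [mVerts_pair, mVerts_pair, Set.insert_comm c b]
  refine ⟨_, hM.diff_union (Set.insert_subset_iff.2 ⟨hab, by simpa using hcd⟩) hQ hQP,
    fun hNM => ?_⟩
  have hacM : s(a, c) ∈ M := hNM ▸ Or.inr (Or.inl rfl)
  have := hM.1.eq_of_mem_of_mem hacM hab (Sym2.mem_mk_left a c) (Sym2.mem_mk_left a b)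
  exact hbc (Sym2.congr_right.1 this).symm

end Matching

section UniquelyRestricted

variable {V : Type*} {G : SimpleGraph V} {M : Set (Sym2 V)}

def restrictMVerts (M : Set (Sym2 V)) : Set (Sym2 (mVerts M)) :=
  {e | e.map Subtype.val ∈ M}

theorem IsMatching.isPerfectM_restrictMVerts (hM : IsMatching G M) :
    IsPerfectM (G.induce (mVerts M)) (restrictMVerts M) := by
  refine ⟨⟨?_, ?_⟩, ?_⟩
  · intro e he
    induction e using Sym2.ind with
    | h x y => exact hM.1 he
  · intro e he f hf hef v hve hvf
    exact hef <| Sym2.map.injective Subtype.val_injective <|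
      hM.eq_of_mem_of_mem he hf (Sym2.mem_map.2 ⟨v, hve, rfl⟩)
        (Sym2.mem_map.2 ⟨v, hvf, rfl⟩)
  · rintro ⟨v, e, he, hve⟩
    obtain ⟨w, rfl⟩ := Sym2.mem_iff_exists.1 hve
    exact ⟨s(⟨v, _, he, Sym2.mem_mk_left v w⟩, ⟨w, _, he, Sym2.mem_mk_right v w⟩), he,
      Sym2.mem_mk_left _ _⟩

theorem IsURMatching.not_adj_of_adj (hM : IsURMatching G M) {a b c d : V}
    (hab : s(a, b) ∈ M) (hcd : s(c, d) ∈ M) (hne : s(a, b) ≠ s(c, d)) (hac : G.Adj a c) :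
    ¬ G.Adj b d := by
  intro hbd
  obtain ⟨hMatch, N, -, huniq⟩ := hM
  have hR := hMatch.isPerfectM_restrictMVerts
  obtain ⟨N', hN', hne'⟩ := hR.exists_ne_of_adj_adj
    (a := ⟨a, _, hab, Sym2.mem_mk_left a b⟩) (b := ⟨b, _, hab, Sym2.mem_mk_right a b⟩)
    (c := ⟨c, _, hcd, Sym2.mem_mk_left c d⟩) (d := ⟨d, _, hcd, Sym2.mem_mk_right c d⟩)
    hab hcd (fun h => hne (congrArg (Sym2.map Subtype.val) h)) hac hbd
  exact hne' ((huniq N' hN').trans (huniq _ hR).symm)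

end UniquelyRestricted

theorem double_adj_of_adj {V : Type*} {G : SimpleGraph V} {u v : V} (h : G.Adj u v) (t : Bool) :
    (double G).Adj (u, t) (v, t) := by
  simp [double, SimpleGraph.fromRel_adj, h, h.ne]

theorem stmt10 {V : Type*} (G : SimpleGraph V) (S : Set V)
    (hM : IsURMatching (double G) ((fun v => s((v, true), (v, false))) '' S)) :
    IsIndep G S := by
  intro u hu v hv huv hadj
  refine hM.not_adj_of_adj ⟨u, hu, rfl⟩ ⟨v, hv, rfl⟩ ?_ (double_adj_of_adj hadj true)
    (double_adj_of_adj hadj false)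
  simpa [Sym2.eq_iff] using huv
end

section
/- Let G be a graph on vertex set {v_1,…,v_n}, and let H have vertex set V(G) ∪ {v'_1,…,v'_n} and edge set E(G) ∪ {v_i v'_i : i ∈ [n]} ∪ {v_i v'_j : v_j ∈ N_G(v_i)} ∪ {v'_i v'_j : v_j ∈ N_G(v_i)}. Then G has an independent set of size at least ℓ if and only if H has an acyclic matching of size at least ℓ. -/
/-- The graph `H` on `V × Bool` (original copy `(·, false)`, primed copy `(·, true)`)
with edges `v_i v_j` (from `G`), `v_i v'_i`, `v_i v'_j` and `v'_i v'_j` for `v_i v_j ∈ E(G)`. -/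
def blowup {V : Type*} (G : SimpleGraph V) : SimpleGraph (V × Bool) :=
  SimpleGraph.fromRel fun a b =>
    (a.1 = b.1 ∧ a.2 ≠ b.2) ∨ G.Adj a.1 b.1

/-!
Given an independent set `I` of `G`, the edges `v v'` for `v ∈ I` form a matching of `H` whose
endpoints induce exactly that matching, a forest. Conversely, the endpoints of an acyclic matching
induce a forest, which is bipartite; choosing in every matching edge its endpoint in one colour
class gives an independent set of `H` of the same size, and since any two distinct vertices of
`H` over the same or adjacent vertices of `G` are adjacent, projecting it to `V` is injective with
independent image.
-/

namespace SimpleGraph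

variable {W : Type*} {H : SimpleGraph W}

lemma isAcyclic_of_adj_unique (h : ∀ ⦃u v w⦄, H.Adj u v → H.Adj u w → v = w) : H.IsAcyclic :=
  fun _ _ hc => hc.snd_ne_penultimate <|
    h (Walk.adj_snd hc.not_nil) (Walk.adj_penultimate hc.not_nil).symm

lemma Coloring.eq_zero_or_eq_zero_of_adj (C : H.Coloring (Fin 2)) {a b : W} (hab : H.Adj a b) :
    C a = 0 ∨ C b = 0 := by
  have := C.valid hab
  omega

end SimpleGraph

open SimpleGraph

section AcyclicMatching

variable {W : Type*} {H : SimpleGraph W} {M : Set (Sym2 W)}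

lemma IsAcyclicMatching.exists_isIndep_ncard_eq (hM : IsAcyclicMatching H M) :
    ∃ I : Set W, IsIndep H I ∧ I.ncard = M.ncard := by
  obtain ⟨⟨hMH, hdisj⟩, hacyc⟩ := hM
  let C := hacyc.coloringTwo
  have hpick : ∀ e : M, ∃ x, ∃ hx : x ∈ mVerts M, x ∈ (e : Sym2 W) ∧ C ⟨x, hx⟩ = 0 := by
    rintro ⟨e, he⟩
    induction e using Sym2.ind with
    | _ a b =>
      have ha : a ∈ mVerts M := ⟨_, he, Sym2.mem_mk_left a b⟩
      have hb : b ∈ mVerts M := ⟨_, he, Sym2.mem_mk_right a b⟩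
      have hab : (H.induce (mVerts M)).Adj ⟨a, ha⟩ ⟨b, hb⟩ := hMH he
      rcases C.eq_zero_or_eq_zero_of_adj hab with h | h
      · exact ⟨a, ha, Sym2.mem_mk_left a b, h⟩
      · exact ⟨b, hb, Sym2.mem_mk_right a b, h⟩
  choose φ hφ using hpick
  have hinj : Function.Injective φ := fun e f h => Subtype.ext <| by_contra fun hef =>
    hdisj e.2 f.2 hef _ (hφ e).2.1 (h ▸ (hφ f).2.1)
  refine ⟨Set.range φ, ?_, Set.ncard_range_of_injective hinj⟩
  rintro _ ⟨e, rfl⟩ _ ⟨f, rfl⟩ - hadj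
  obtain ⟨hx, -, hcx⟩ := hφ e
  obtain ⟨hy, -, hcy⟩ := hφ f
  have hxy : (H.induce (mVerts M)).Adj ⟨φ e, hx⟩ ⟨φ f, hy⟩ := hadj
  exact C.valid hxy (hcx.trans hcy.symm)

end AcyclicMatching

section Blowup

variable {V : Type*} {G : SimpleGraph V}

lemma blowup_adj {a b : V × Bool} :
    (blowup G).Adj a b ↔ a ≠ b ∧ (a.1 = b.1 ∨ G.Adj a.1 b.1) := by
  rw [blowup, fromRel_adj]
  refine and_congr_right fun hab => ?_
  constructor
  · rintro ((⟨h, -⟩ | h) | (⟨h, -⟩ | h))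
    exacts [.inl h, .inr h, .inl h.symm, .inr h.symm]
  · rintro (h | h)
    · exact .inl (.inl ⟨h, fun h2 => hab (Prod.ext h h2)⟩)
    · exact .inl (.inr h)

lemma IsIndep.injOn_fst_of_blowup {S : Set (V × Bool)} (hS : IsIndep (blowup G) S) :
    S.InjOn Prod.fst :=
  fun _ ha _ hb h => by_contra fun hab => hS ha hb hab (blowup_adj.2 ⟨hab, Or.inl h⟩)

lemma IsIndep.image_fst_of_blowup {S : Set (V × Bool)} (hS : IsIndep (blowup G) S) :
    IsIndep G (Prod.fst '' S) := by
  rintro _ ⟨a, ha, rfl⟩ _ ⟨b, hb, rfl⟩ hab hG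
  have hne : a ≠ b := fun h => hab (congrArg Prod.fst h)
  exact hS ha hb hne (blowup_adj.2 ⟨hne, .inr hG⟩)

lemma IsIndep.eq_of_blowup_adj {I : Set V} (hI : IsIndep G I) {a b : V × Bool} (ha : a.1 ∈ I)
    (hb : b.1 ∈ I) (hab : (blowup G).Adj a b) : b = (a.1, !a.2) := by
  obtain ⟨hne, h | h⟩ := blowup_adj.1 hab
  · exact Prod.ext h.symm (Bool.eq_not_iff.2 fun h2 => hne (Prod.ext h h2.symm))
  · exact (hI ha hb (G.ne_of_adj h) h).elim

def copyMatching (I : Set V) : Set (Sym2 (V × Bool)) :=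
  (fun v => s((v, false), (v, true))) '' I

lemma ncard_copyMatching (I : Set V) : (copyMatching I).ncard = I.ncard :=
  Set.ncard_image_of_injective I fun u v h => by
    simpa using congrArg (fun e : Sym2 (V × Bool) => e.map Prod.fst) h

lemma mem_mVerts_copyMatching {I : Set V} {x : V × Bool} :
    x ∈ mVerts (copyMatching I) ↔ x.1 ∈ I := by
  constructor
  · rintro ⟨_, ⟨v, hv, rfl⟩, hx⟩
    rcases Sym2.mem_iff.1 hx with rfl | rfl <;> exact hv
  · intro hx
    refine ⟨_, ⟨x.1, hx, rfl⟩, ?_⟩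
    rcases x with ⟨v, _ | _⟩ <;> simp

lemma isAcyclicMatching_copyMatching {I : Set V} (hI : IsIndep G I) :
    IsAcyclicMatching (blowup G) (copyMatching I) := by
  refine ⟨⟨?_, ?_⟩, isAcyclic_of_adj_unique ?_⟩
  · rintro _ ⟨v, -, rfl⟩
    show (blowup G).Adj (v, false) (v, true)
    exact blowup_adj.2 ⟨by simp, .inl rfl⟩
  · rintro _ ⟨u, -, rfl⟩ _ ⟨v, -, rfl⟩ huv x hxu hxv
    rcases Sym2.mem_iff.1 hxu with rfl | rfl <;> rcases Sym2.mem_iff.1 hxv with h | h <;>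
      exact huv (by rw [(Prod.mk.inj h).1])
  · rintro ⟨a, ha⟩ ⟨b, hb⟩ ⟨c, hc⟩ hab hac
    have ha' := mem_mVerts_copyMatching.1 ha
    exact Subtype.ext <| (hI.eq_of_blowup_adj ha' (mem_mVerts_copyMatching.1 hb) hab).trans
      (hI.eq_of_blowup_adj ha' (mem_mVerts_copyMatching.1 hc) hac).symm

end Blowup

theorem stmt15_general {V : Type*} (G : SimpleGraph V) (ℓ : ℕ) :
    (∃ I : Set V, IsIndep G I ∧ ℓ ≤ I.ncard) ↔
    (∃ M : Set (Sym2 (V × Bool)), IsAcyclicMatching (blowup G) M ∧ ℓ ≤ M.ncard) := by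
  constructor
  · rintro ⟨I, hI, hℓ⟩
    exact ⟨copyMatching I, isAcyclicMatching_copyMatching hI, (ncard_copyMatching I).symm ▸ hℓ⟩
  · rintro ⟨M, hM, hℓ⟩
    obtain ⟨S, hS, hSM⟩ := hM.exists_isIndep_ncard_eq
    refine ⟨Prod.fst '' S, hS.image_fst_of_blowup, ?_⟩
    rwa [hS.injOn_fst_of_blowup.ncard_image, hSM]

theorem stmt15 {V : Type*} [Fintype V] (G : SimpleGraph V) (ℓ : ℕ) :
    (∃ I : Set V, IsIndep G I ∧ ℓ ≤ I.ncard) ↔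
    (∃ M : Set (Sym2 (V × Bool)), IsAcyclicMatching (blowup G) M ∧ ℓ ≤ M.ncard) :=
  stmt15_general G ℓ
end

section
/- Let G be a graph, X a feedback vertex set of G with |X| ≤ n − 2ℓ, and suppose G − X has a matching of size at least ℓ. Then G has an acyclic matching of size at least ℓ. -/
section
variable {V W : Type*} {G : SimpleGraph V} {H : SimpleGraph W}

lemma IsMatching.image_map (f : G ↪g H) {N : Set (Sym2 V)} (hN : IsMatching G N) :
    IsMatching H (Sym2.map f '' N) := by
  obtain ⟨hsub, hdisj⟩ := hN
  refine ⟨?_, ?_⟩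
  · rintro _ ⟨e, he, rfl⟩
    exact f.toHom.map_mem_edgeSet (hsub he)
  · rintro _ ⟨e, he, rfl⟩ _ ⟨e', he', rfl⟩ hne _ hv hv'
    obtain ⟨u, hu, rfl⟩ := Sym2.mem_map.mp hv
    obtain ⟨u', hu', hfu⟩ := Sym2.mem_map.mp hv'
    exact hdisj he he' (fun h => hne (h ▸ rfl)) u hu (f.injective hfu ▸ hu')

lemma mVerts_image_map_subset_range (f : V → W) (N : Set (Sym2 V)) :
    mVerts (Sym2.map f '' N) ⊆ Set.range f := by
  rintro _ ⟨_, ⟨e, _, rfl⟩, hv⟩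
  obtain ⟨u, _, rfl⟩ := Sym2.mem_map.mp hv
  exact ⟨u, rfl⟩

lemma IsMatching.isAcyclicMatching_of_mVerts_subset {M : Set (Sym2 V)} {S : Set V}
    (hM : IsMatching G M) (hS : (G.induce S).IsAcyclic) (h : mVerts M ⊆ S) :
    IsAcyclicMatching G M :=
  ⟨hM, hS.embedding (G.induceHomOfLE h)⟩

end

theorem stmt19_general {V : Type*} (G : SimpleGraph V) (X : Set V) (ℓ : ℕ)
    (hX : (G.induce Xᶜ).IsAcyclic)
    (hmatch : ∃ N : Set (Sym2 (Xᶜ : Set V)),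
      IsMatching (G.induce Xᶜ) N ∧ ℓ ≤ N.ncard) :
    ∃ M : Set (Sym2 V), IsAcyclicMatching G M ∧ ℓ ≤ M.ncard := by
  obtain ⟨N, hN, hcard⟩ := hmatch
  let f : G.induce Xᶜ ↪g G := SimpleGraph.Embedding.induce Xᶜ
  refine ⟨Sym2.map f '' N, (hN.image_map f).isAcyclicMatching_of_mVerts_subset hX ?_, ?_⟩
  · exact (mVerts_image_map_subset_range f N).trans Subtype.range_val.subset
  · rwa [Set.ncard_image_of_injective _ (Sym2.map.injective f.injective)]

theorem stmt19 {V : Type*} [Fintype V] (G : SimpleGraph V) (X : Set V) (ℓ : ℕ)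
    (hX : (G.induce Xᶜ).IsAcyclic)
    (hsize : X.ncard + 2 * ℓ ≤ Fintype.card V)
    (hmatch : ∃ N : Set (Sym2 (Xᶜ : Set V)),
      IsMatching (G.induce Xᶜ) N ∧ ℓ ≤ N.ncard) :
    ∃ M : Set (Sym2 V), IsAcyclicMatching G M ∧ ℓ ≤ M.ncard :=
  stmt19_general G X ℓ hX hmatch
end
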